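/- arXiv:1403.3182 — 2 statements merged into one kernel-verified Lean document; each statement's English description precedes it below -/
import Mathlib

section
/- Let 1 < λ < 2, g₀ a probability density, g(t) the solution of the fractional diffusion equation with ĝ(ξ,t) = e^{-|ξ|^λ t} ĝ₀(ξ), and g_ε(t) the solution of the Rosenau approximation with ĝ_ε(ξ,t) = e^{-t|ξ|^λ/(1+|εξ|^λ)} ĝ₀(ξ). Then for any 0 < s < λ there exists a constant C = C(λ,s) > 0 such that d_s(g(t), g_ε(t)) ≤ C t^{s/(2λ)} ε^{s/2} for all t > 0 and ε > 0. -/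
/-!
Both solutions multiply `ĝ₀` by `e^{-A}` and `e^{-B}` with
`A = t|ξ|^λ ≥ B = t|ξ|^λ / (1 + (ε|ξ|)^λ) ≥ 0`, and `|ĝ₀| ≤ 1`. On `[0, ∞)` the map `x ↦ e^{-x}` is
bounded by `1` and `1`-Lipschitz, so `|e^{-A} - e^{-B}| ≤ min 1 (A - B) ≤ (A - B)^θ` for any
`θ ∈ [0, 1]`. Since `A - B ≤ t ε^λ |ξ|^{2λ}`, the choice `θ = s / (2λ)` gives the bound
`t^{s/(2λ)} ε^{s/2} |ξ|^s`, i.e. the claim with `C = 1`.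
-/

open MeasureTheory ENNReal

noncomputable def ft (f : ℝ → ℝ) (ξ : ℝ) : ℂ :=
  ∫ v : ℝ, (f v : ℂ) * Complex.exp (-(Complex.I * v * ξ))

noncomputable def dFour (s : ℝ) (f g : ℝ → ℝ) : ℝ≥0∞ :=
  ⨆ ξ : {x : ℝ // x ≠ 0}, ENNReal.ofReal (‖ft f ξ.1 - ft g ξ.1‖ / |ξ.1| ^ s)

def IsProbDensity (f : ℝ → ℝ) : Prop :=
  (∀ v, 0 ≤ f v) ∧ Integrable f ∧ ∫ v : ℝ, f v = 1

namespace Real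

lemma min_one_le_rpow {x θ : ℝ} (hx : 0 ≤ x) (hθ0 : 0 ≤ θ) (hθ1 : θ ≤ 1) : min 1 x ≤ x ^ θ := by
  rcases le_total x 1 with hx1 | hx1
  · exact (min_le_right 1 x).trans (self_le_rpow_of_le_one hx hx1 hθ1)
  · exact (min_le_left 1 x).trans (one_le_rpow hx1 hθ0)

lemma exp_neg_sub_exp_neg_le_min {A B : ℝ} (hB : 0 ≤ B) (hBA : B ≤ A) :
    exp (-B) - exp (-A) ≤ min 1 (A - B) := by
  have hexpB : exp (-B) ≤ 1 := exp_le_one_iff.mpr (neg_nonpos.mpr hB)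
  have hsplit : exp (-A) = exp (-B) * exp (-(A - B)) := by rw [← exp_add]; ring_nf
  have hlin := one_sub_le_exp_neg (A - B)
  refine le_min (by linarith [exp_pos (-A)]) ?_
  nlinarith [exp_pos (-B)]

lemma abs_exp_neg_sub_exp_neg_le_rpow {A B θ : ℝ} (hB : 0 ≤ B) (hBA : B ≤ A)
    (hθ0 : 0 ≤ θ) (hθ1 : θ ≤ 1) : |exp (-A) - exp (-B)| ≤ (A - B) ^ θ := by
  rw [abs_sub_comm, abs_of_nonneg (sub_nonneg.mpr (exp_le_exp.mpr (neg_le_neg hBA)))]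
  exact (exp_neg_sub_exp_neg_le_min hB hBA).trans (min_one_le_rpow (sub_nonneg.mpr hBA) hθ0 hθ1)

end Real

open Real

lemma norm_ft_le_one {f : ℝ → ℝ} (hf : IsProbDensity f) (ξ : ℝ) : ‖ft f ξ‖ ≤ 1 := by
  obtain ⟨hnonneg, -, hmass⟩ := hf
  calc ‖ft f ξ‖ ≤ ∫ v : ℝ, ‖(f v : ℂ) * Complex.exp (-(Complex.I * v * ξ))‖ :=
        norm_integral_le_integral_norm _
    _ = ∫ v : ℝ, f v := by
        congr 1; funext v
        have hphase : -(Complex.I * v * ξ) = ((-(v * ξ) : ℝ) : ℂ) * Complex.I := by push_cast; ring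
        rw [norm_mul, hphase, Complex.norm_exp_ofReal_mul_I, Complex.norm_real, norm_eq_abs,
          abs_of_nonneg (hnonneg v), mul_one]
    _ = 1 := hmass

lemma sub_div_one_add_le_mul {a c : ℝ} (ha : 0 ≤ a) (hc : 0 ≤ c) : a - a / (1 + c) ≤ a * c := by
  have hquot : a - a / (1 + c) = a * c / (1 + c) := by field_simp; ring
  rw [hquot]
  exact div_le_self (mul_nonneg ha hc) (by linarith)

lemma rosenau_exponent_gap_le {lam t ε : ℝ} (ht : 0 ≤ t) (hε : 0 ≤ ε) (ξ : ℝ) :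
    |ξ| ^ lam * t - t * |ξ| ^ lam / (1 + (ε * |ξ|) ^ lam) ≤ t * ε ^ lam * |ξ| ^ (2 * lam) := by
  have ha : 0 ≤ t * |ξ| ^ lam := by positivity
  have hsq : |ξ| ^ (2 * lam) = (|ξ| ^ lam) ^ 2 := by
    rw [mul_comm, rpow_mul (abs_nonneg ξ), Real.rpow_two]
  calc |ξ| ^ lam * t - t * |ξ| ^ lam / (1 + (ε * |ξ|) ^ lam)
      ≤ t * |ξ| ^ lam * (ε * |ξ|) ^ lam := by
        rw [mul_comm (|ξ| ^ lam)]; exact sub_div_one_add_le_mul ha (by positivity)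
    _ = t * ε ^ lam * |ξ| ^ (2 * lam) := by
        rw [mul_rpow hε (abs_nonneg ξ), hsq]; ring

lemma abs_heat_multiplier_sub_rosenau_multiplier_le {lam s t ε : ℝ} (hs0 : 0 < s)
    (hs : s ≤ 2 * lam) (ht : 0 ≤ t) (hε : 0 ≤ ε) (ξ : ℝ) :
    |exp (-(|ξ| ^ lam) * t) - exp (-(t * |ξ| ^ lam / (1 + (ε * |ξ|) ^ lam)))|
      ≤ t ^ (s / (2 * lam)) * ε ^ (s / 2) * |ξ| ^ s := by
  have hlam : 0 < lam := by linarith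
  set A := |ξ| ^ lam * t
  set B := t * |ξ| ^ lam / (1 + (ε * |ξ|) ^ lam)
  have hB : 0 ≤ B := by positivity
  have hBA : B ≤ A :=
    (div_le_self (by positivity) (le_add_of_nonneg_right (by positivity))).trans_eq (mul_comm _ _)
  have hθ0 : 0 ≤ s / (2 * lam) := by positivity
  have hθ1 : s / (2 * lam) ≤ 1 := (div_le_one (by positivity)).mpr hs
  calc |exp (-(|ξ| ^ lam) * t) - exp (-B)| = |exp (-A) - exp (-B)| := by rw [neg_mul]
    _ ≤ (A - B) ^ (s / (2 * lam)) := abs_exp_neg_sub_exp_neg_le_rpow hB hBA hθ0 hθ1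
    _ ≤ (t * ε ^ lam * |ξ| ^ (2 * lam)) ^ (s / (2 * lam)) :=
        rpow_le_rpow (sub_nonneg.mpr hBA) (rosenau_exponent_gap_le ht hε ξ) hθ0
    _ = t ^ (s / (2 * lam)) * ε ^ (s / 2) * |ξ| ^ s := by
        rw [mul_rpow (by positivity) (by positivity), mul_rpow ht (by positivity),
          ← rpow_mul hε, ← rpow_mul (abs_nonneg ξ)]
        congr 3 <;> field_simp

theorem rosenau_linnik_approx_general (lam s : ℝ)
    (hs0 : 0 < s) (hs : s < lam) :
    ∃ C : ℝ, 0 < C ∧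
      ∀ g₀ : ℝ → ℝ, IsProbDensity g₀ →
        ∀ t ε : ℝ, 0 < t → 0 < ε →
          ∀ g gε : ℝ → ℝ,
            (∀ ξ : ℝ, ft g ξ = (Real.exp (-(|ξ| ^ lam) * t) : ℂ) * ft g₀ ξ) →
            (∀ ξ : ℝ, ft gε ξ =
              (Real.exp (-(t * |ξ| ^ lam / (1 + (ε * |ξ|) ^ lam))) : ℂ) * ft g₀ ξ) →
            dFour s g gε ≤ ENNReal.ofReal (C * t ^ (s / (2 * lam)) * ε ^ (s / 2)) := by
  refine ⟨1, one_pos, fun g₀ hg₀ t ε ht hε g gε hg hgε ↦ iSup_le fun ⟨ξ, hξ⟩ ↦ ?_⟩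
  apply ENNReal.ofReal_le_ofReal
  rw [div_le_iff₀ (rpow_pos_of_pos (abs_pos.mpr hξ) s), one_mul, hg, hgε, ← sub_mul, norm_mul,
    ← Complex.ofReal_sub, Complex.norm_real, norm_eq_abs]
  calc _ ≤ t ^ (s / (2 * lam)) * ε ^ (s / 2) * |ξ| ^ s * 1 :=
        mul_le_mul (abs_heat_multiplier_sub_rosenau_multiplier_le hs0 (by linarith) ht.le hε.le ξ)
          (norm_ft_le_one hg₀ ξ) (norm_nonneg _) (by positivity)
    _ = _ := mul_one _

theorem rosenau_linnik_approx (lam s : ℝ) (hlam1 : 1 < lam) (hlam2 : lam < 2)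
    (hs0 : 0 < s) (hs : s < lam) :
    ∃ C : ℝ, 0 < C ∧
      ∀ g₀ : ℝ → ℝ, IsProbDensity g₀ →
        ∀ t ε : ℝ, 0 < t → 0 < ε →
          ∀ g gε : ℝ → ℝ,
            (∀ ξ : ℝ, ft g ξ = (Real.exp (-(|ξ| ^ lam) * t) : ℂ) * ft g₀ ξ) →
            (∀ ξ : ℝ, ft gε ξ =
              (Real.exp (-(t * |ξ| ^ lam / (1 + (ε * |ξ|) ^ lam))) : ℂ) * ft g₀ ξ) →
            dFour s g gε ≤ ENNReal.ofReal (C * t ^ (s / (2 * lam)) * ε ^ (s / 2)) :=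
  rosenau_linnik_approx_general lam s hs0 hs
end

section
/- Let 1 < λ < 2, let g₀ be a probability density with d_s(g₀, L_λ) < ∞ for some 0 < s < λ, and define the scaled solutions ĥ(ξ,t) = e^{-t|ξ|^λ/(1+t)} ĝ₀(ξ/(1+t)^{1/λ}) and ĥ_ε(ξ,t) = e^{-t|ξ|^λ/(1+t+ε^λ|ξ|^λ)} ĝ₀(ξ/(1+t)^{1/λ}). Then there exists C = C(λ,s) > 0 such that d_s(h_ε(t), L_λ) ≤ C( (1+t)^{-s/λ} + ε^{s/2} t^{s/(2λ)} (1+t)^{-s/λ} ) for all t > 0. -/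
open MeasureTheory ENNReal

/-!
Write `η = ξ / (1 + t) ^ (1 / λ)`. The Lévy law is self-similar, `L̂(ξ) = m L̂(η)` with
`m = e^{-t|ξ|^λ/(1+t)}`, so `ĥ_ε(ξ) - L̂(ξ) = (m_ε - m) ĝ₀(η) + m (ĝ₀(η) - L̂(η))`, where `m_ε` is
the regularized multiplier: this is the triangle inequality through the unregularized solution.
The second term is at most `d_s(g₀, L_λ) |η|^s`. In the first, the two exponents differ by at most
`ε^λ t (|η|^λ)^2`, and `0 ≤ e^{-A} - e^{-B} ≤ min 1 (B - A) ≤ (B - A)^θ` for `θ = s/(2λ) ≤ 1`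
turns this into `ε^{s/2} t^{s/(2λ)} |η|^s`. Both terms thus carry `|η|^s = |ξ|^s (1+t)^{-s/λ}`.
-/

open Real

lemma norm_ft_sub_le_dFour_mul {s : ℝ} {f g : ℝ → ℝ} (hfg : dFour s f g ≠ ⊤) {ξ : ℝ}
    (hξ : ξ ≠ 0) : ‖ft f ξ - ft g ξ‖ ≤ (dFour s f g).toReal * |ξ| ^ s := by
  have hξs : 0 < |ξ| ^ s := rpow_pos_of_pos (abs_pos.mpr hξ) s
  rw [← div_le_iff₀ hξs, ← ENNReal.ofReal_le_iff_le_toReal hfg]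
  exact le_iSup (fun ζ : {x : ℝ // x ≠ 0} =>
    ENNReal.ofReal (‖ft f ζ.1 - ft g ζ.1‖ / |ζ.1| ^ s)) ⟨ξ, hξ⟩

lemma dFour_le_ofReal {s K : ℝ} {f g : ℝ → ℝ}
    (h : ∀ ξ : ℝ, ξ ≠ 0 → ‖ft f ξ - ft g ξ‖ ≤ K * |ξ| ^ s) : dFour s f g ≤ ENNReal.ofReal K :=
  iSup_le fun ⟨ξ, hξ⟩ => ENNReal.ofReal_le_ofReal <|
    (div_le_iff₀ (rpow_pos_of_pos (abs_pos.mpr hξ) s)).mpr (h ξ hξ)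

lemma one_sub_exp_neg_le_rpow {x θ : ℝ} (hx : 0 ≤ x) (hθ0 : 0 ≤ θ) (hθ1 : θ ≤ 1) :
    1 - exp (-x) ≤ x ^ θ := by
  rcases le_or_gt x 1 with hx1 | hx1
  · calc 1 - exp (-x) ≤ x := by linarith [one_sub_le_exp_neg x]
      _ = x ^ (1 : ℝ) := (rpow_one x).symm
      _ ≤ x ^ θ := rpow_le_rpow_of_exponent_ge' hx hx1 hθ0 hθ1
  · calc 1 - exp (-x) ≤ 1 := by linarith [exp_pos (-x)]
      _ ≤ x ^ θ := one_le_rpow hx1.le hθ0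

lemma exp_neg_sub_exp_neg_le_rpow {A B θ : ℝ} (hA : 0 ≤ A) (hAB : A ≤ B) (hθ0 : 0 ≤ θ)
    (hθ1 : θ ≤ 1) : exp (-A) - exp (-B) ≤ (B - A) ^ θ := by
  have hfactor : exp (-A) - exp (-B) = exp (-A) * (1 - exp (-(B - A))) := by
    rw [mul_sub, mul_one, ← exp_add]; ring_nf
  have hexpA : exp (-A) ≤ 1 := exp_le_one_iff.mpr (neg_nonpos.mpr hA)
  have hgap : 0 ≤ 1 - exp (-(B - A)) := by
    linarith [exp_le_one_iff.mpr (neg_nonpos.mpr (sub_nonneg.mpr hAB))]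
  calc exp (-A) - exp (-B) ≤ 1 - exp (-(B - A)) := by
        rw [hfactor]; exact mul_le_of_le_one_left hgap hexpA
    _ ≤ (B - A) ^ θ := one_sub_exp_neg_le_rpow (sub_nonneg.mpr hAB) hθ0 hθ1

/-- Regularized minus unregularized multiplier, for `p = |ξ|^λ` and `q = ε^λ`. -/
lemma exp_neg_regularized_sub_exp_neg_le {p q t θ : ℝ} (hp : 0 ≤ p) (hq : 0 ≤ q) (ht : 0 ≤ t)
    (hθ0 : 0 ≤ θ) (hθ1 : θ ≤ 1) :
    exp (-(t * p / (1 + t + q * p))) - exp (-(t * p / (1 + t)))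
      ≤ (q * t * (p / (1 + t)) ^ 2) ^ θ := by
  have hu : 0 < 1 + t := by linarith
  have hqp : 0 ≤ q * p := mul_nonneg hq hp
  have hgap : t * p / (1 + t) - t * p / (1 + t + q * p)
      = q * t * p ^ 2 / ((1 + t) * (1 + t + q * p)) := by
    field_simp; ring
  have hAB : t * p / (1 + t + q * p) ≤ t * p / (1 + t) :=
    div_le_div_of_nonneg_left (by positivity) hu (by linarith)
  have hgap_le : t * p / (1 + t) - t * p / (1 + t + q * p) ≤ q * t * (p / (1 + t)) ^ 2 := by
    rw [hgap, div_pow, ← mul_div_assoc, sq (1 + t)]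
    exact div_le_div_of_nonneg_left (by positivity) (by positivity)
      (mul_le_mul_of_nonneg_left (by linarith) hu.le)
  calc _ ≤ (t * p / (1 + t) - t * p / (1 + t + q * p)) ^ θ :=
        exp_neg_sub_exp_neg_le_rpow (by positivity) hAB hθ0 hθ1
    _ ≤ _ := rpow_le_rpow (sub_nonneg.mpr hAB) hgap_le hθ0

lemma rpow_mul_mul_sq_rpow {lam s ε t x : ℝ} (hlam : lam ≠ 0) (hε : 0 ≤ ε) (ht : 0 ≤ t)
    (hx : 0 ≤ x) :
    (ε ^ lam * t * (x ^ lam) ^ 2) ^ (s / (2 * lam)) = ε ^ (s / 2) * t ^ (s / (2 * lam)) * x ^ s := by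
  have hxsq : (x ^ lam) ^ 2 = x ^ (2 * lam) := by
    rw [← Real.rpow_natCast, ← rpow_mul hx]; norm_num [mul_comm]
  rw [hxsq, mul_rpow (by positivity) (by positivity), mul_rpow (by positivity) ht,
    ← rpow_mul hε, ← rpow_mul hx]
  congr 3 <;> field_simp

lemma abs_div_rpow_one_div_rpow {u : ℝ} (hu : 0 < u) (lam s ξ : ℝ) :
    |ξ / u ^ (1 / lam)| ^ s = |ξ| ^ s * u ^ (-(s / lam)) := by
  rw [abs_div, abs_of_pos (rpow_pos_of_pos hu _), div_rpow (abs_nonneg ξ) (rpow_nonneg hu.le _),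
    ← rpow_mul hu.le, rpow_neg hu.le, div_eq_mul_inv, one_div_mul_eq_div]

lemma ft_eq_exp_mul_ft_rescaled {lam t : ℝ} (hlam : lam ≠ 0) (ht : 0 ≤ t) {L : ℝ → ℝ}
    (hLft : ∀ ξ : ℝ, ft L ξ = (exp (-(|ξ| ^ lam)) : ℂ)) (ξ : ℝ) :
    ft L ξ = (exp (-(t * |ξ| ^ lam / (1 + t))) : ℂ) * ft L (ξ / (1 + t) ^ (1 / lam)) := by
  have hu : 0 < 1 + t := by linarith
  rw [hLft, hLft, abs_div_rpow_one_div_rpow hu, div_self hlam, Real.rpow_neg_one,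
    ← Complex.ofReal_mul, ← exp_add]
  congr 3
  field_simp
  ring

lemma norm_ft_sub_levy_le {lam s ε t : ℝ} (hlam : 0 < lam) (hs0 : 0 ≤ s) (hs : s ≤ 2 * lam)
    (hε : 0 ≤ ε) (ht : 0 ≤ t) {L g₀ h : ℝ → ℝ}
    (hLft : ∀ ξ : ℝ, ft L ξ = (exp (-(|ξ| ^ lam)) : ℂ))
    (hg₀ : IsProbDensity g₀) (hd : dFour s g₀ L ≠ ⊤)
    (hft : ∀ ξ : ℝ, ft h ξ = (exp (-(t * |ξ| ^ lam / (1 + t + ε ^ lam * |ξ| ^ lam))) : ℂ) *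
      ft g₀ (ξ / (1 + t) ^ (1 / lam)))
    {ξ : ℝ} (hξ : ξ ≠ 0) :
    ‖ft h ξ - ft L ξ‖ ≤ (ε ^ (s / 2) * t ^ (s / (2 * lam)) + (dFour s g₀ L).toReal)
      * (|ξ| ^ s * (1 + t) ^ (-(s / lam))) := by
  have hu : 0 < 1 + t := by linarith
  set η := ξ / (1 + t) ^ (1 / lam)
  have hη : η ≠ 0 := div_ne_zero hξ (rpow_pos_of_pos hu _).ne'
  have hηlam : |ξ| ^ lam / (1 + t) = |η| ^ lam := by
    rw [abs_div_rpow_one_div_rpow hu, div_self hlam.ne', Real.rpow_neg_one, div_eq_mul_inv]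
  set m := exp (-(t * |ξ| ^ lam / (1 + t)))
  set mε := exp (-(t * |ξ| ^ lam / (1 + t + ε ^ lam * |ξ| ^ lam)))
  have hsplit : ft h ξ - ft L ξ = ((mε - m : ℝ) : ℂ) * ft g₀ η + (m : ℂ) * (ft g₀ η - ft L η) := by
    rw [hft, ft_eq_exp_mul_ft_rescaled hlam.ne' ht hLft ξ, Complex.ofReal_sub]; ring
  have hmult : mε - m ≤ ε ^ (s / 2) * t ^ (s / (2 * lam)) * |η| ^ s := by
    refine (exp_neg_regularized_sub_exp_neg_le (rpow_nonneg (abs_nonneg ξ) lam)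
      (rpow_nonneg hε lam) ht (by positivity) ((div_le_one (by positivity)).mpr hs)).trans_eq ?_
    rw [hηlam, rpow_mul_mul_sq_rpow hlam.ne' hε ht (abs_nonneg η)]
  have hm_le_mε : m ≤ mε := by
    refine exp_le_exp.mpr (neg_le_neg (div_le_div_of_nonneg_left (by positivity) hu ?_))
    nlinarith [rpow_nonneg hε lam, rpow_nonneg (abs_nonneg ξ) lam]
  have hm_le_one : m ≤ 1 := exp_le_one_iff.mpr (neg_nonpos.mpr (by positivity))
  calc ‖ft h ξ - ft L ξ‖ ≤ (mε - m) * ‖ft g₀ η‖ + m * ‖ft g₀ η - ft L η‖ := by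
        rw [hsplit]
        refine (norm_add_le _ _).trans_eq ?_
        rw [norm_mul, norm_mul, Complex.norm_real, Complex.norm_real, Real.norm_of_nonneg
          (sub_nonneg.mpr hm_le_mε), Real.norm_of_nonneg (exp_pos _).le]
    _ ≤ (mε - m) * 1 + 1 * ((dFour s g₀ L).toReal * |η| ^ s) := by
        gcongr
        · exact norm_ft_le_one hg₀ η
        · exact norm_ft_sub_le_dFour_mul hd hη
    _ ≤ (ε ^ (s / 2) * t ^ (s / (2 * lam)) + (dFour s g₀ L).toReal) * |η| ^ s := by linarith
    _ = _ := by rw [abs_div_rpow_one_div_rpow hu]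

theorem scaled_rosenau_converges_to_levy_general (lam s : ℝ)
    (hs0 : 0 < s) (hs : s < lam)
    (L : ℝ → ℝ)
    (hLft : ∀ ξ : ℝ, ft L ξ = (Real.exp (-(|ξ| ^ lam)) : ℂ))
    (g₀ : ℝ → ℝ) (hg₀ : IsProbDensity g₀)
    (hd : dFour s g₀ L < ⊤) :
    ∃ C : ℝ, 0 < C ∧
      ∀ ε : ℝ, 0 < ε → ∀ t : ℝ, 0 < t →
        ∀ hε : ℝ → ℝ,
          (∀ ξ : ℝ, ft hε ξ =
            (Real.exp (-(t * |ξ| ^ lam / (1 + t + ε ^ lam * |ξ| ^ lam))) : ℂ) *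
              ft g₀ (ξ / (1 + t) ^ (1 / lam))) →
          dFour s hε L ≤
            ENNReal.ofReal (C * ((1 + t) ^ (-(s / lam))
              + ε ^ (s / 2) * t ^ (s / (2 * lam)) * (1 + t) ^ (-(s / lam)))) := by
  set D := (dFour s g₀ L).toReal
  refine ⟨D + 1, by positivity, fun ε hε t ht h hft => dFour_le_ofReal fun ξ hξ => ?_⟩
  set a := ε ^ (s / 2) * t ^ (s / (2 * lam))
  set P := |ξ| ^ s * (1 + t) ^ (-(s / lam))
  have ha : 0 ≤ a := by positivity
  have hP : 0 ≤ P := by positivity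
  calc ‖ft h ξ - ft L ξ‖ ≤ (a + D) * P :=
        norm_ft_sub_levy_le (hs0.trans hs) hs0.le (by linarith) hε.le ht.le hLft hg₀ hd.ne hft hξ
    _ ≤ (D + 1) * ((1 + t) ^ (-(s / lam)) + a * (1 + t) ^ (-(s / lam))) * |ξ| ^ s := by
        have hDa : 0 ≤ D * a := mul_nonneg ENNReal.toReal_nonneg ha
        nlinarith

theorem scaled_rosenau_converges_to_levy (lam s : ℝ)
    (hlam1 : 1 < lam) (hlam2 : lam < 2) (hs0 : 0 < s) (hs : s < lam)
    (L : ℝ → ℝ) (hL : IsProbDensity L)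
    (hLft : ∀ ξ : ℝ, ft L ξ = (Real.exp (-(|ξ| ^ lam)) : ℂ))
    (g₀ : ℝ → ℝ) (hg₀ : IsProbDensity g₀)
    (hd : dFour s g₀ L < ⊤) :
    ∃ C : ℝ, 0 < C ∧
      ∀ ε : ℝ, 0 < ε → ∀ t : ℝ, 0 < t →
        ∀ hε : ℝ → ℝ,
          (∀ ξ : ℝ, ft hε ξ =
            (Real.exp (-(t * |ξ| ^ lam / (1 + t + ε ^ lam * |ξ| ^ lam))) : ℂ) *
              ft g₀ (ξ / (1 + t) ^ (1 / lam))) →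
          dFour s hε L ≤
            ENNReal.ofReal (C * ((1 + t) ^ (-(s / lam))
              + ε ^ (s / 2) * t ^ (s / (2 * lam)) * (1 + t) ^ (-(s / lam)))) :=
  scaled_rosenau_converges_to_levy_general lam s hs0 hs L hLft g₀ hg₀ hd
end
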